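/- arXiv:1505.03792 — 2 statements merged into one kernel-verified Lean document; each statement's English description precedes it below -/
import Mathlib

section
/- For any density matrix ρ and Hermitian A, I_L(ρ,A) := −(1/2)tr([ρ,A]²) ≤ (1/4) F(ρ,A), where F(ρ,A) := 2 Σ_{a,b: λ_a+λ_b>0} (λ_a−λ_b)²/(λ_a+λ_b) |⟨ψ_a|A|ψ_b⟩|² is the quantum Fisher information. -/
open Matrix Finset

/-- `I_L(ρ,A) := -(1/2) tr([ρ,A]²)` (a real quantity; we take the real part). -/
noncomputable def commIL {ι : Type*} [Fintype ι] [DecidableEq ι]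
    (ρ A : Matrix ι ι ℂ) : ℝ :=
  (-(1 / 2) * Matrix.trace ((ρ * A - A * ρ) * (ρ * A - A * ρ))).re

/-- Quantum Fisher information via a spectral decomposition of `ρ`. -/
noncomputable def qfi {ι : Type*} [Fintype ι] (lam : ι → ℝ) (v : ι → ι → ℂ)
    (A : Matrix ι ι ℂ) : ℝ :=
  2 * ∑ a : ι, ∑ b : ι,
    if 0 < lam a + lam b then
      (lam a - lam b) ^ 2 / (lam a + lam b) * Complex.normSq (star (v a) ⬝ᵥ (A *ᵥ v b))
    else 0

/-- for any density matrix `ρ` and Hermitian `A`,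
`I_L(ρ,A) ≤ (1/4) F(ρ,A)`. -/
theorem commIL_le_quarter_qfi {n : ℕ} (ρ A : Matrix (Fin n) (Fin n) ℂ)
    (hA : A.IsHermitian) (lam : Fin n → ℝ) (v : Fin n → Fin n → ℂ)
    (hortho : ∀ a b, star (v a) ⬝ᵥ v b = if a = b then (1 : ℂ) else 0)
    (hlam : ∀ a, 0 ≤ lam a) (hsum : ∑ a, lam a = 1)
    (hdec : ρ = ∑ a, (lam a : ℂ) • Matrix.vecMulVec (v a) (star (v a))) :
    commIL ρ A ≤ (1 / 4) * qfi lam v A := by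
  classical
  set U : Matrix (Fin n) (Fin n) ℂ := Matrix.of fun i a => v a i with hUdef
  set D : Matrix (Fin n) (Fin n) ℂ := Matrix.diagonal fun a => (lam a : ℂ) with hDdef
  have hUU : Uᴴ * U = 1 := by
    ext a b
    simpa [Matrix.mul_apply, Matrix.one_apply, dotProduct, Matrix.conjTranspose_apply,
      hUdef] using hortho a b
  have hUUt : U * Uᴴ = 1 := mul_eq_one_comm.mp hUU
  have hρ : ρ = U * D * Uᴴ := by
    rw [hdec]
    ext i j
    simp only [Matrix.mul_apply, Matrix.sum_apply, Matrix.smul_apply, Matrix.vecMulVec_apply,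
      Matrix.conjTranspose_apply, hUdef, hDdef, Matrix.diagonal_apply, Matrix.of_apply,
      mul_ite, ite_mul, mul_zero, zero_mul, Finset.sum_ite_eq, Finset.sum_ite_eq', Pi.star_apply, Finset.mem_univ, if_true,
      smul_eq_mul]
    apply Finset.sum_congr rfl
    intro x _
    ring
  set B : Matrix (Fin n) (Fin n) ℂ := Uᴴ * A * U with hBdef
  have hAeq : A = U * B * Uᴴ := by
    rw [hBdef]
    calc A = (U * Uᴴ) * A * (U * Uᴴ) := by rw [hUUt, Matrix.one_mul, Matrix.mul_one]
    _ = U * (Uᴴ * A * U) * Uᴴ := by simp only [Matrix.mul_assoc]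
  have hBherm : Bᴴ = B := by
    rw [hBdef]
    simp only [Matrix.conjTranspose_mul, Matrix.conjTranspose_conjTranspose, hA.eq,
      Matrix.mul_assoc]
  have hBba : ∀ a b, B b a = starRingEnd ℂ (B a b) := by
    intro a b
    conv_lhs => rw [← hBherm]
    rfl
  have hmulU : ∀ X Y : Matrix (Fin n) (Fin n) ℂ,
      (U * X * Uᴴ) * (U * Y * Uᴴ) = U * (X * Y) * Uᴴ := by
    intro X Y
    calc (U * X * Uᴴ) * (U * Y * Uᴴ) = U * (X * ((Uᴴ * U) * (Y * Uᴴ))) := by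
          simp only [Matrix.mul_assoc]
    _ = U * (X * Y) * Uᴴ := by rw [hUU, Matrix.one_mul]; simp only [Matrix.mul_assoc]
  set C : Matrix (Fin n) (Fin n) ℂ := D * B - B * D with hCdef
  have hcomm : ρ * A - A * ρ = U * C * Uᴴ := by
    rw [hρ, hAeq, hCdef, hmulU, hmulU, Matrix.mul_sub, Matrix.sub_mul]
  have htr : Matrix.trace ((ρ * A - A * ρ) * (ρ * A - A * ρ)) = Matrix.trace (C * C) := by
    rw [hcomm, hmulU, Matrix.trace_mul_cycle, ← Matrix.mul_assoc, hUU, Matrix.one_mul]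
  have hCab : ∀ a b, C a b = ((lam a : ℂ) - lam b) * B a b := by
    intro a b
    simp only [hCdef, Matrix.sub_apply, hDdef, Matrix.diagonal_mul, Matrix.mul_diagonal]
    ring
  have htr2 : Matrix.trace (C * C) =
      ∑ a : Fin n, ∑ b : Fin n, (-(((lam a - lam b) ^ 2 * Complex.normSq (B a b) : ℝ)) : ℂ) := by
    rw [Matrix.trace]
    simp only [Matrix.diag_apply, Matrix.mul_apply]
    apply Finset.sum_congr rfl
    intro a _
    apply Finset.sum_congr rfl
    intro b _
    rw [hCab, hCab, hBba a b]
    have h := Complex.mul_conj (B a b)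
    push_cast
    linear_combination (-((lam a : ℂ) - lam b) ^ 2) * h
  have hB' : ∀ a b, star (v a) ⬝ᵥ (A *ᵥ v b) = B a b := by
    intro a b
    simp only [hBdef, Matrix.mul_apply, Matrix.mulVec, dotProduct,
      Matrix.conjTranspose_apply, hUdef, Matrix.of_apply, Pi.star_apply, Finset.mul_sum,
      Finset.sum_mul]
    rw [Finset.sum_comm]
    apply Finset.sum_congr rfl
    intro i _
    apply Finset.sum_congr rfl
    intro j _
    ring
  have hIL : commIL ρ A =
      (1 / 2) * ∑ a : Fin n, ∑ b : Fin n, (lam a - lam b) ^ 2 * Complex.normSq (B a b) := by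
    have : (-(1 / 2 : ℂ)) * Matrix.trace ((ρ * A - A * ρ) * (ρ * A - A * ρ)) =
        (((1 / 2) * ∑ a : Fin n, ∑ b : Fin n,
          (lam a - lam b) ^ 2 * Complex.normSq (B a b) : ℝ) : ℂ) := by
      rw [htr, htr2]
      push_cast
      simp only [Finset.mul_sum]
      apply Finset.sum_congr rfl
      intro a _
      apply Finset.sum_congr rfl
      intro b _
      ring
    rw [commIL, this, Complex.ofReal_re]
  have hqfi : qfi lam v A = 2 * ∑ a : Fin n, ∑ b : Fin n,
      if 0 < lam a + lam b then
        (lam a - lam b) ^ 2 / (lam a + lam b) * Complex.normSq (B a b)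
      else 0 := by
    simp only [qfi, hB']
  have key : ∀ a b : Fin n, (lam a - lam b) ^ 2 * Complex.normSq (B a b) ≤
      (if 0 < lam a + lam b then
        (lam a - lam b) ^ 2 / (lam a + lam b) * Complex.normSq (B a b) else 0) := by
    intro a b
    by_cases hpos : 0 < lam a + lam b
    · rw [if_pos hpos]
      apply mul_le_mul_of_nonneg_right _ (Complex.normSq_nonneg _)
      rw [le_div_iff₀ hpos]
      by_cases hab : a = b
      · subst hab; simp
      · have hs1 : lam a + lam b ≤ 1 := by
          have h1 : lam a + lam b = ∑ x ∈ ({a, b} : Finset (Fin n)), lam x := by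
            rw [Finset.sum_pair hab]
          have h2 : ∑ x ∈ ({a, b} : Finset (Fin n)), lam x ≤ ∑ x, lam x :=
            Finset.sum_le_sum_of_subset_of_nonneg (Finset.subset_univ _)
              (fun i _ _ => hlam i)
          rw [h1]; rw [hsum] at h2; exact h2
        nlinarith [sq_nonneg (lam a - lam b)]
    · rw [if_neg hpos]
      push_neg at hpos
      have ha : lam a = 0 := by have := hlam a; have := hlam b; linarith
      have hb : lam b = 0 := by have := hlam a; have := hlam b; linarith
      simp [ha, hb]
  rw [hIL, hqfi]
  rw [show (1 / 4 : ℝ) * (2 * ∑ a : Fin n, ∑ b : Fin n, _) = (1 / 2) * _ from by ring]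
  apply mul_le_mul_of_nonneg_left _ (by norm_num : (0:ℝ) ≤ 1/2)
  exact Finset.sum_le_sum fun a _ => Finset.sum_le_sum fun b _ => key a b
end

section
/- For density matrices ρ on H_S and σ on H_A and Hermitian A on H_S, the quantity I_L satisfies I_L(ρ⊗σ, A⊗I) = I_L(ρ,A)·tr(σ²). Consequently, if tr(σ²) < 1 and I_L(ρ,A) > 0, replacing σ by a pure state strictly increases I_L, so I_L is not a monotone under free operations. -/
open Matrix Finset Kronecker ComplexOrder

lemma sigma_trace_im {m : ℕ} (σ : Matrix (Fin m) (Fin m) ℂ) (hσ : σ.IsHermitian) :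
    (Matrix.trace (σ * σ)).im = 0 := by
  have h : star (Matrix.trace (σ * σ)) = Matrix.trace (σ * σ) := by
    rw [← Matrix.trace_conjTranspose, Matrix.conjTranspose_mul, hσ.eq]
  have := congrArg Complex.im h
  simp only [Complex.star_def, Complex.conj_im] at this
  linarith

lemma commIL_kron {n m : ℕ} (ρ A : Matrix (Fin n) (Fin n) ℂ)
    (σ : Matrix (Fin m) (Fin m) ℂ) (hσ : σ.IsHermitian) :
    commIL (ρ ⊗ₖ σ) (A ⊗ₖ (1 : Matrix (Fin m) (Fin m) ℂ)) =
      commIL ρ A * (Matrix.trace (σ * σ)).re := by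
  have key : (ρ ⊗ₖ σ) * (A ⊗ₖ (1 : Matrix (Fin m) (Fin m) ℂ)) -
      (A ⊗ₖ (1 : Matrix (Fin m) (Fin m) ℂ)) * (ρ ⊗ₖ σ) = (ρ * A - A * ρ) ⊗ₖ σ := by
    rw [← Matrix.mul_kronecker_mul, ← Matrix.mul_kronecker_mul, mul_one, one_mul]
    ext ⟨i, j⟩ ⟨k, l⟩
    simp [Matrix.kroneckerMap_apply, sub_mul]
  unfold commIL
  rw [key, ← Matrix.mul_kronecker_mul, Matrix.trace_kronecker]
  have him := sigma_trace_im σ hσ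
  set c := Matrix.trace ((ρ * A - A * ρ) * (ρ * A - A * ρ))
  set t := Matrix.trace (σ * σ)
  simp [Complex.mul_re, Complex.mul_im, him]
  ring

/-- `I_L(ρ ⊗ σ, A ⊗ I) = I_L(ρ,A) · tr(σ²)`; consequently, if
`tr(σ²) < 1` and `I_L(ρ,A) > 0`, replacing the ancilla `σ` by any pure state `σ'`
(a free operation w.r.t. `A ⊗ I`) strictly increases `I_L`, so `I_L` is not a monotone. -/
theorem commIL_tensor_ancilla {n m : ℕ}
    (ρ : Matrix (Fin n) (Fin n) ℂ) (A : Matrix (Fin n) (Fin n) ℂ)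
    (σ : Matrix (Fin m) (Fin m) ℂ)
    (hρ : ρ.PosSemidef) (hρtr : ρ.trace = 1) (hA : A.IsHermitian)
    (hσ : σ.PosSemidef) (hσtr : σ.trace = 1) :
    commIL (ρ ⊗ₖ σ) (A ⊗ₖ (1 : Matrix (Fin m) (Fin m) ℂ)) =
      commIL ρ A * (Matrix.trace (σ * σ)).re ∧
    (∀ σ' : Matrix (Fin m) (Fin m) ℂ, σ'.PosSemidef → σ'.trace = 1 →
      Matrix.trace (σ' * σ') = 1 →
      (Matrix.trace (σ * σ)).re < 1 → 0 < commIL ρ A →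
      commIL (ρ ⊗ₖ σ) (A ⊗ₖ (1 : Matrix (Fin m) (Fin m) ℂ)) <
        commIL (ρ ⊗ₖ σ') (A ⊗ₖ (1 : Matrix (Fin m) (Fin m) ℂ))) := by
  refine ⟨commIL_kron ρ A σ hσ.isHermitian, ?_⟩
  intro σ' hσ' _ hσ'2 hlt hpos
  rw [commIL_kron ρ A σ hσ.isHermitian, commIL_kron ρ A σ' hσ'.isHermitian, hσ'2]
  simpa using (mul_lt_mul_of_pos_left hlt hpos)
end
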